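/- Let k be a field and a < b, c < d in ℝ. The sheaf Ext of interval modules satisfies Ext¹_sh(k[a,b), k[c,d)) ≅ k(−∞,c) if a < c ≤ b < d, and is 0 otherwise. -/

import Mathlib

/-! Restricted to the up-set `[x,∞)`, the module `k[a,∞)` is the linearised representable functor
at `max a x`, so the Yoneda lemma gives `Hom_sh(k[a,∞), N) ≅ N ∘ max a`, under which
`Hom_sh(−, N)` of the inclusion `k[b,∞) → k[a,∞)` becomes the family of structure maps
`N (max a x) → N (max b x)`. For an interval module `N = k_I` both ends are interval modules
again, of the preimages of `I` under `max a` and `max b`, and the cokernel of the canonical map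
`k_I → k_J` is `k_{J \ I}`. For `I = [c,d)` this difference is `(−∞,c)` when `a < c ≤ b < d`
and empty otherwise. -/

open CategoryTheory

noncomputable section
attribute [local instance] Classical.propDecidable
set_option linter.unusedSectionVars false

variable (R : Type) [Ring R] {P : Type} [Preorder P]

/-- Condition that a subset is order-convex. -/
def IsConvexSet (I : Set P) : Prop := ∀ ⦃x y z : P⦄, x ∈ I → z ∈ I → x ≤ y → y ≤ z → y ∈ I

/-- The value of the interval persistence module at a point. -/
def intervalObj (I : Set P) (a : P) : Submodule R R :=
  if a ∈ I then (⊤ : Submodule R R) else ⊥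

lemma intervalObj_eq_zero {I : Set P} {a : P} (h : a ∉ I) (x : intervalObj R I a) :
    x = 0 := by
  have hx := x.2
  simp only [intervalObj, if_neg h, Submodule.mem_bot] at hx
  exact Subtype.ext hx

/-- The structure map of the interval module between two degrees. -/
def intervalMapAux (I : Set P) (a b : P) :
    (intervalObj R I a) →ₗ[R] (intervalObj R I b) :=
  if h : a ∈ I ∧ b ∈ I then
    Submodule.inclusion (by simp [intervalObj, h.1, h.2])
  else 0

lemma intervalMapAux_coe {I : Set P} {a b : P} (ha : a ∈ I) (hb : b ∈ I)
    (x : intervalObj R I a) : ((intervalMapAux R I a b x : R)) = (x : R) := by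
  simp [intervalMapAux, ha, hb]

lemma intervalMapAux_of_not {I : Set P} {a b : P} (h : ¬(a ∈ I ∧ b ∈ I))
    (x : intervalObj R I a) : intervalMapAux R I a b x = 0 := by
  simp [intervalMapAux, h]

/-- The interval (indicator) persistence module of a convex set `I`,
as a functor from the preorder `P` to `R`-modules. -/
def intervalModule (I : Set P) (hI : IsConvexSet I) : P ⥤ ModuleCat R where
  obj a := ModuleCat.of R (intervalObj R I a)
  map {a b} f := ModuleCat.ofHom (intervalMapAux R I a b)
  map_id a := by
    apply ModuleCat.hom_ext
    refine LinearMap.ext fun (x : intervalObj R I a) => ?_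
    by_cases h : a ∈ I
    · exact Subtype.ext (intervalMapAux_coe R h h x)
    · rw [intervalObj_eq_zero R h x]
      simp
  map_comp {a b c} f g := by
    apply ModuleCat.hom_ext
    refine LinearMap.ext fun (x : intervalObj R I a) => ?_
    show intervalMapAux R I a c x = intervalMapAux R I b c (intervalMapAux R I a b x)
    by_cases ha : a ∈ I
    · by_cases hc : c ∈ I
      · have hb : b ∈ I := hI ha hc (leOfHom f) (leOfHom g)
        apply Subtype.ext
        rw [intervalMapAux_coe R ha hc, intervalMapAux_coe R hb hc,
          intervalMapAux_coe R ha hb]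
      · rw [intervalMapAux_of_not R (fun h => hc h.2),
          intervalMapAux_of_not R (fun h => hc h.2)]
    · rw [intervalObj_eq_zero R ha x]
      simp

end

lemma IsConvexSet.of_ordConnected {P : Type} [Preorder P] {s : Set P}
    (h : s.OrdConnected) : IsConvexSet s :=
  fun _ _ _ hx hz hxy hyz => h.out hx hz ⟨hxy, hyz⟩

open CategoryTheory

noncomputable section
variable (k : Type) [Field k]

/-- The inclusion of the principal up-set `[x,∞)` into `ℝ`. -/
def upIncl (x : ℝ) : {y : ℝ // x ≤ y} ⥤ ℝ :=
  Monotone.functor (f := Subtype.val) (fun _ _ h => h)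

/-- For `x ≤ y`, the inclusion of up-sets `[y,∞) ⊆ [x,∞)`. -/
def upRestrict {x y : ℝ} (h : x ≤ y) : {z : ℝ // y ≤ z} ⥤ {z : ℝ // x ≤ z} :=
  Monotone.functor (f := fun z => ⟨z.1, h.trans z.2⟩) (fun _ _ hh => hh)

/-- The sheaf internal hom of persistence modules: its stalk at `x` is the space of
natural transformations between the restrictions of `M` and `N` to the principal
up-set `[x,∞)`, with structure maps given by further restriction. -/
def homScript (M N : ℝ ⥤ ModuleCat k) : ℝ ⥤ ModuleCat k where
  obj x := ModuleCat.of k ((upIncl x ⋙ M) ⟶ (upIncl x ⋙ N))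
  map {x y} f := ModuleCat.ofHom
    { toFun := fun α => Functor.whiskerLeft (upRestrict (leOfHom f)) α
      map_add' := fun α β => by
        apply NatTrans.ext
        funext z
        rfl
      map_smul' := fun c α => by
        apply NatTrans.ext
        funext z
        rfl }
  map_id x := by
    ext α
    rfl
  map_comp {x y z} f g := by
    ext α
    rfl

/-- Contravariant functoriality of the sheaf internal hom in the first variable. -/
def homScriptContraMap {M' M : ℝ ⥤ ModuleCat k} (φ : M' ⟶ M) (N : ℝ ⥤ ModuleCat k) :
    homScript k M N ⟶ homScript k M' N where
  app x := ModuleCat.ofHom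
    { toFun := fun α => Functor.whiskerLeft (upIncl x) φ ≫ α
      map_add' := fun α β => Preadditive.comp_add _ _ _ _ _ _
      map_smul' := fun c α => Linear.comp_smul _ _ _ _ _ _ }
  naturality {x y} f := by
    ext α
    apply NatTrans.ext
    funext z
    rfl

end

open CategoryTheory

noncomputable section
attribute [local instance] Classical.propDecidable
set_option linter.unusedSectionVars false
variable (R : Type) [Ring R] {P : Type} [Preorder P]

/-- The degreewise component of a morphism between interval modules. -/
def intervalCross (I J : Set P) (a : P) :
    (intervalObj R I a) →ₗ[R] (intervalObj R J a) :=
  if h : a ∈ I ∧ a ∈ J then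
    Submodule.inclusion (by simp [intervalObj, h.1, h.2])
  else 0

lemma intervalCross_coe {I J : Set P} {a : P} (hI : a ∈ I) (hJ : a ∈ J)
    (x : intervalObj R I a) : ((intervalCross R I J a x : R)) = (x : R) := by
  simp [intervalCross, hI, hJ]

lemma intervalCross_of_not {I J : Set P} {a : P} (h : ¬(a ∈ I ∧ a ∈ J))
    (x : intervalObj R I a) : intervalCross R I J a x = 0 := by
  simp [intervalCross, h]

/-- The canonical morphism of interval persistence modules, whose component at a point
in `I ∩ J` is the identity of `R` and which is zero elsewhere.  The hypothesis `hcond`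
is exactly the condition making this family of maps natural. -/
def intervalHom (I J : Set P) (hI : IsConvexSet I) (hJ : IsConvexSet J)
    (hcond : ∀ ⦃x y : P⦄, x ≤ y → x ∈ I → y ∈ J → (y ∈ I ↔ x ∈ J)) :
    intervalModule R I hI ⟶ intervalModule R J hJ where
  app a := ModuleCat.ofHom (intervalCross R I J a)
  naturality {a b} f := by
    apply ModuleCat.hom_ext
    refine LinearMap.ext fun (x : intervalObj R I a) => ?_
    show intervalCross R I J b (intervalMapAux R I a b x) =
      intervalMapAux R J a b (intervalCross R I J a x)
    by_cases ha : a ∈ I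
    · by_cases hbJ : b ∈ J
      · have hiff := hcond (leOfHom f) ha hbJ
        by_cases hbI : b ∈ I
        · have haJ : a ∈ J := hiff.mp hbI
          apply Subtype.ext
          rw [intervalCross_coe R hbI hbJ, intervalMapAux_coe R ha hbI,
            intervalMapAux_coe R haJ hbJ, intervalCross_coe R ha haJ]
        · have haJ : a ∉ J := fun h => hbI (hiff.mpr h)
          rw [intervalCross_of_not R (fun h => hbI h.1),
            intervalCross_of_not R (fun h => haJ h.2)]
          simp
      · rw [intervalCross_of_not R (fun h => hbJ h.2),
          intervalMapAux_of_not R (fun h => hbJ h.2)]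
    · rw [intervalObj_eq_zero R ha x]
      simp

end

open CategoryTheory Limits

section
variable {R : Type} [Ring R] {P : Type}

def intervalObjOne {I : Set P} {p : P} (hp : p ∈ I) : intervalObj R I p :=
  ⟨1, by simp [intervalObj, hp]⟩

lemma intervalObj_eq_smul_one {I : Set P} {p : P} (hp : p ∈ I) (v : intervalObj R I p) :
    v = (v : R) • intervalObjOne hp :=
  Subtype.ext (mul_one _).symm

end

section
variable {R : Type} [Ring R] {P : Type} [Preorder P]

lemma intervalMapAux_one {I : Set P} {p q : P} (hp : p ∈ I) (hq : q ∈ I) :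
    intervalMapAux R I p q (intervalObjOne hp) = intervalObjOne hq :=
  Subtype.ext (intervalMapAux_coe R hp hq _)

lemma intervalCross_one {I J : Set P} {p : P} (hI : p ∈ I) (hJ : p ∈ J) :
    intervalCross R I J p (intervalObjOne hI) = intervalObjOne hJ :=
  Subtype.ext (intervalCross_coe R hI hJ _)

lemma intervalCross_surjective {I J : Set P} {a : P} (h : a ∈ J → a ∈ I) :
    Function.Surjective (intervalCross R I J a) := by
  intro y
  by_cases hJ : a ∈ J
  · exact ⟨⟨y, by simp [intervalObj, h hJ]⟩, Subtype.ext (intervalCross_coe R (h hJ) hJ _)⟩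
  · exact ⟨0, by rw [map_zero, intervalObj_eq_zero R hJ y]⟩

lemma intervalCross_injective {I J : Set P} {a : P} (h : a ∈ I → a ∈ J) :
    Function.Injective (intervalCross R I J a) := by
  intro y z hyz
  by_cases hI : a ∈ I
  · apply Subtype.ext
    rw [← intervalCross_coe R hI (h hI) y, ← intervalCross_coe R hI (h hI) z, hyz]
  · rw [intervalObj_eq_zero R hI y, intervalObj_eq_zero R hI z]

lemma IsConvexSet.sdiff {I J : Set P} (hJ : IsConvexSet J)
    (hcond : ∀ ⦃x y : P⦄, x ≤ y → x ∈ I → y ∈ J → (y ∈ I ↔ x ∈ J)) :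
    IsConvexSet (J \ I) := by
  intro x y z hx hz hxy hyz
  have hy : y ∈ J := hJ hx.1 hz.1 hxy hyz
  exact ⟨hy, fun hyI => hz.2 ((hcond hyz hyI hz.1).mpr hy)⟩

lemma intervalHom_cond_sdiff {I J : Set P}
    (hcond : ∀ ⦃x y : P⦄, x ≤ y → x ∈ I → y ∈ J → (y ∈ I ↔ x ∈ J)) :
    ∀ ⦃x y : P⦄, x ≤ y → x ∈ J → y ∈ J \ I → (y ∈ J ↔ x ∈ J \ I) :=
  fun _ _ hxy hx hy => iff_of_true hy.1 ⟨hx, fun hxI => hy.2 ((hcond hxy hxI hy.1).mpr hx)⟩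

lemma intervalHom_comp_eq_zero {I J K : Set P} (hI : IsConvexSet I) (hJ : IsConvexSet J)
    (hK : IsConvexSet K) (hIJ) (hJK) (hdisj : Disjoint I K) :
    intervalHom R I J hI hJ hIJ ≫ intervalHom R J K hJ hK hJK = 0 := by
  ext a v
  change intervalCross R J K a (intervalCross R I J a v) = 0
  by_cases hI : a ∈ I
  · exact intervalCross_of_not R (fun h => Set.disjoint_left.mp hdisj hI h.2) _
  · rw [intervalObj_eq_zero R hI v, map_zero, map_zero]

end

noncomputable def isColimitCokernelCoforkOfPointwiseExact {K : Type*} [Category K] {R : Type}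
    [Ring R] {F G H : K ⥤ ModuleCat R} (f : F ⟶ G) (g : G ⟶ H) (w : f ≫ g = 0)
    (hexact : ∀ x y, g.app x y = 0 → ∃ z, f.app x z = y)
    (hsurj : ∀ x, Function.Surjective (g.app x)) :
    IsColimit (CokernelCofork.ofπ g w) := by
  refine evaluationJointlyReflectsColimits _ fun x => ?_
  refine (isColimitMapCoconeCoforkEquiv' ((evaluation K (ModuleCat R)).obj x) w).symm ?_
  have hz : f.app x ≫ g.app x = 0 := by rw [← NatTrans.comp_app, w, NatTrans.app_zero]
  have : Epi (g.app x) := (ModuleCat.epi_iff_surjective _).mpr (hsurj x)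
  exact ((ShortComplex.moduleCat_exact_iff (ShortComplex.mk _ _ hz)).mpr (hexact x)).gIsCokernel

section
variable (R : Type) [Ring R] {P : Type} [Preorder P]

noncomputable def cokernelIntervalHomIso (I J : Set P) (hI : IsConvexSet I) (hJ : IsConvexSet J)
    (hcond : ∀ ⦃x y : P⦄, x ≤ y → x ∈ I → y ∈ J → (y ∈ I ↔ x ∈ J)) :
    cokernel (intervalHom R I J hI hJ hcond) ≅ intervalModule R (J \ I) (hJ.sdiff hcond) :=
  (cokernelIsCokernel _).coconePointUniqueUpToIso <|
    isColimitCokernelCoforkOfPointwiseExact _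
      (intervalHom R J (J \ I) hJ (hJ.sdiff hcond) (intervalHom_cond_sdiff hcond))
      (intervalHom_comp_eq_zero _ _ _ _ _ Set.disjoint_sdiff_right)
      (fun x y hy => by
        by_cases hx : x ∈ J \ I
        · have hy0 : y = 0 := intervalCross_injective (fun _ => hx)
            (hy.trans (map_zero (intervalCross R J (J \ I) x)).symm)
          exact ⟨0, by rw [map_zero, hy0]⟩
        · exact intervalCross_surjective (fun hJ => by_contra fun hI => hx ⟨hJ, hI⟩) y)
      (fun _ => intervalCross_surjective And.left)

lemma isZero_intervalModule_of_eq_empty {I : Set P} (hI : IsConvexSet I) (h : I = ∅) :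
    IsZero (intervalModule R I hI) :=
  Functor.isZero _ fun a => by
    have : Subsingleton ((intervalModule R I hI).obj a) :=
      ⟨fun x y => by rw [intervalObj_eq_zero R (h ▸ Set.notMem_empty a) x,
        intervalObj_eq_zero R (h ▸ Set.notMem_empty a) y]⟩
    exact ModuleCat.isZero_of_subsingleton _

noncomputable def intervalModuleIsoOfEq {I J : Set P} (hI : IsConvexSet I) (hJ : IsConvexSet J)
    (h : I = J) : intervalModule R I hI ≅ intervalModule R J hJ :=
  eqToIso (by subst h; rfl)

end

lemma monotone_max_left {α : Type*} [LinearOrder α] (b : α) : Monotone fun x : α => max b x :=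
  monotone_const.max monotone_id

section
variable {P Q : Type} [Preorder P] [Preorder Q]

def Monotone.natTransOfLE {f g : P → Q} (hf : Monotone f) (hg : Monotone g) (h : f ≤ g) :
    hf.functor ⟶ hg.functor where
  app x := homOfLE (h x)

lemma IsConvexSet.preimage {I : Set Q} (hI : IsConvexSet I) {f : P → Q} (hf : Monotone f) :
    IsConvexSet (f ⁻¹' I) :=
  fun _ _ _ hx hz hxy hyz => hI hx hz (hf hxy) (hf hyz)

lemma IsConvexSet.intervalHom_cond_preimage {I : Set Q} (hI : IsConvexSet I) {f g : P → Q}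
    (hf : Monotone f) (hg : Monotone g) (h : f ≤ g) :
    ∀ ⦃x y : P⦄, x ≤ y → x ∈ f ⁻¹' I → y ∈ g ⁻¹' I → (y ∈ f ⁻¹' I ↔ x ∈ g ⁻¹' I) :=
  fun _ _ hxy hx hy => iff_of_true (hI hx hy (hf hxy) (h _)) (hI hx hy (h _) (hg hxy))

variable (R : Type) [Ring R]

noncomputable def intervalModulePreimageIso {I : Set Q} (hI : IsConvexSet I) {f : P → Q}
    (hf : Monotone f) :
    hf.functor ⋙ intervalModule R I hI ≅ intervalModule R (f ⁻¹' I) (hI.preimage hf) :=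
  NatIso.ofComponents (fun _ => Iso.refl _) fun _ => rfl

lemma whiskerRight_natTransOfLE_comp_preimageIso {I : Set Q} (hI : IsConvexSet I) {f g : P → Q}
    (hf : Monotone f) (hg : Monotone g) (h : f ≤ g) (hcond) :
    Functor.whiskerRight (hf.natTransOfLE hg h) (intervalModule R I hI) ≫
        (intervalModulePreimageIso R hI hg).hom =
      (intervalModulePreimageIso R hI hf).hom ≫
        intervalHom R (f ⁻¹' I) (g ⁻¹' I) (hI.preimage hf) (hI.preimage hg) hcond :=
  rfl

end

section
variable {k : Type} [Field k] (N : ℝ ⥤ ModuleCat k) {b : ℝ} (hb : IsConvexSet (Set.Ici b))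

noncomputable def homScriptIciEval {x : ℝ}
    (α : upIncl x ⋙ intervalModule k (Set.Ici b) hb ⟶ upIncl x ⋙ N) : N.obj (max b x) :=
  α.app ⟨max b x, le_max_right b x⟩ (intervalObjOne (p := max b x) (le_max_left b x))

lemma natTrans_app_eq_smul_map_eval {x : ℝ}
    (α : upIncl x ⋙ intervalModule k (Set.Ici b) hb ⟶ upIncl x ⋙ N)
    (p : {y : ℝ // x ≤ y}) (hp : b ≤ p.1) (w : intervalObj k (Set.Ici b) p.1) :
    α.app p w = (w : k) • N.map (homOfLE (max_le hp p.2)) (homScriptIciEval N hb α) := by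
  have hle : (⟨max b x, le_max_right b x⟩ : {y : ℝ // x ≤ y}) ≤ p := max_le hp p.2
  have hone : α.app p (intervalObjOne hp) =
      N.map (homOfLE (max_le hp p.2)) (homScriptIciEval N hb α) :=
    (congrArg (α.app p) (intervalMapAux_one (le_max_left b x) hp)).symm.trans
      (congrArg (fun g => g.hom (intervalObjOne (le_max_left b x))) (α.naturality (homOfLE hle)))
  rw [← hone]
  exact (congrArg (α.app p) (intervalObj_eq_smul_one hp w)).trans (map_smul (α.app p).hom _ _)

noncomputable def natTransOfIciElementApp {x : ℝ} (v : N.obj (max b x)) (p : ℝ) (hxp : x ≤ p) :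
    intervalObj k (Set.Ici b) p →ₗ[k] N.obj p :=
  if hp : b ≤ p then
    (LinearMap.toSpanSingleton k _ (N.map (homOfLE (max_le hp hxp)) v)).comp (Submodule.subtype _)
  else 0

lemma natTransOfIciElementApp_apply {x : ℝ} (v : N.obj (max b x)) {p : ℝ} (hxp : x ≤ p)
    (hp : b ≤ p) (w : intervalObj k (Set.Ici b) p) :
    natTransOfIciElementApp N v p hxp w = (w : k) • N.map (homOfLE (max_le hp hxp)) v := by
  simp [natTransOfIciElementApp, hp]

noncomputable def natTransOfIciElement {x : ℝ} (v : N.obj (max b x)) :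
    upIncl x ⋙ intervalModule k (Set.Ici b) hb ⟶ upIncl x ⋙ N where
  app p := ModuleCat.ofHom (natTransOfIciElementApp N v p.1 p.2)
  naturality {p q} f := by
    refine ModuleCat.hom_ext (LinearMap.ext fun (w : intervalObj k (Set.Ici b) p.1) => ?_)
    change natTransOfIciElementApp N v q.1 q.2 (intervalMapAux k _ p.1 q.1 w) =
      N.map (homOfLE (leOfHom f)) (natTransOfIciElementApp N v p.1 p.2 w)
    by_cases hp : b ≤ p.1
    · have hq : b ≤ q.1 := hp.trans (leOfHom f)
      rw [natTransOfIciElementApp_apply N v q.2 hq, natTransOfIciElementApp_apply N v p.2 hp,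
        intervalMapAux_coe k (I := Set.Ici b) hp hq, map_smul, ← ModuleCat.comp_apply,
        ← N.map_comp, homOfLE_comp]
    · simp [intervalObj_eq_zero k (show p.1 ∉ Set.Ici b from hp) w]

noncomputable def homScriptIciEquiv (x : ℝ) :
    (upIncl x ⋙ intervalModule k (Set.Ici b) hb ⟶ upIncl x ⋙ N) ≃ₗ[k] N.obj (max b x) where
  toFun := homScriptIciEval N hb
  map_add' _ _ := rfl
  map_smul' _ _ := rfl
  invFun := natTransOfIciElement N hb
  left_inv α := by
    refine NatTrans.ext (funext fun p => ModuleCat.hom_ext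
      (LinearMap.ext fun (w : intervalObj k (Set.Ici b) p.1) => ?_))
    change natTransOfIciElementApp N (homScriptIciEval N hb α) p.1 p.2 w = α.app p w
    by_cases hp : b ≤ p.1
    · rw [natTransOfIciElementApp_apply N _ p.2 hp, natTrans_app_eq_smul_map_eval N hb α p hp]
    · rw [intervalObj_eq_zero k (show p.1 ∉ Set.Ici b from hp) w, map_zero]
      exact (map_zero (α.app p).hom).symm
  right_inv v := by
    change natTransOfIciElementApp N v _ (le_max_right b x) (intervalObjOne (le_max_left b x)) = v
    rw [natTransOfIciElementApp_apply N v _ (le_max_left b x)]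
    simp [intervalObjOne]

noncomputable def homScriptIciIso :
    homScript k (intervalModule k (Set.Ici b) hb) N ≅ (monotone_max_left b).functor ⋙ N :=
  NatIso.ofComponents (fun x => (homScriptIciEquiv N hb x).toModuleIso) fun {x y} f => by
    refine ModuleCat.hom_ext (LinearMap.ext fun α => ?_)
    change homScriptIciEval N hb (Functor.whiskerLeft (upRestrict (leOfHom f)) α) =
      N.map (homOfLE _) (homScriptIciEval N hb α)
    exact (natTrans_app_eq_smul_map_eval N hb α ⟨max b y, (leOfHom f).trans (le_max_right b y)⟩
      (le_max_left b y) _).trans (one_smul k _)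

lemma homScriptContraMap_intervalHom_comp_iciIso {a : ℝ} (ha : IsConvexSet (Set.Ici a))
    (hab : a ≤ b) (hcond) :
    homScriptContraMap k (intervalHom k (Set.Ici b) (Set.Ici a) hb ha hcond) N ≫
        (homScriptIciIso N hb).hom =
      (homScriptIciIso N ha).hom ≫ Functor.whiskerRight
        ((monotone_max_left a).natTransOfLE (monotone_max_left b)
          fun x => max_le_max_right x hab) N := by
  refine NatTrans.ext (funext fun x => ModuleCat.hom_ext (LinearMap.ext
    fun (α : upIncl x ⋙ intervalModule k (Set.Ici a) ha ⟶ upIncl x ⋙ N) => ?_))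
  change α.app ⟨max b x, le_max_right b x⟩ (intervalCross k (Set.Ici b) (Set.Ici a) (max b x)
      (intervalObjOne (le_max_left b x))) = N.map (homOfLE _) (homScriptIciEval N ha α)
  rw [intervalCross_one (I := Set.Ici b) (J := Set.Ici a) (le_max_left b x)
    (hab.trans (le_max_left b x))]
  exact (natTrans_app_eq_smul_map_eval N ha α _ (hab.trans (le_max_left b x)) _).trans
    (one_smul k _)

end

noncomputable def cokernelHomScriptContraMapIso {k : Type} [Field k] {I : Set ℝ}
    (hI : IsConvexSet I) {a b : ℝ} (ha : IsConvexSet (Set.Ici a)) (hb : IsConvexSet (Set.Ici b))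
    (hab : a ≤ b) (hcond) :
    cokernel (homScriptContraMap k (intervalHom k (Set.Ici b) (Set.Ici a) hb ha hcond)
        (intervalModule k I hI)) ≅
      intervalModule k ((fun x => max b x) ⁻¹' I \ (fun x => max a x) ⁻¹' I)
        ((hI.preimage (monotone_max_left b)).sdiff
          (hI.intervalHom_cond_preimage (monotone_max_left a) (monotone_max_left b)
            fun x => max_le_max_right x hab)) :=
  cokernel.mapIso _ _ (homScriptIciIso _ ha ≪≫ intervalModulePreimageIso k hI _)
      (homScriptIciIso _ hb ≪≫ intervalModulePreimageIso k hI _) (by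
        rw [Iso.trans_hom, Iso.trans_hom, ← Category.assoc,
          homScriptContraMap_intervalHom_comp_iciIso _ hb ha hab, Category.assoc,
          whiskerRight_natTransOfLE_comp_preimageIso, Category.assoc]) ≪≫
    cokernelIntervalHomIso k _ _ _ _ (hI.intervalHom_cond_preimage (monotone_max_left a)
      (monotone_max_left b) fun x => max_le_max_right x hab)

section
variable {α : Type*} [LinearOrder α] {a b c d : α}

lemma preimage_max_Ico_sdiff_eq_Iio (hac : a < c) (hcb : c ≤ b) (hbd : b < d) :
    (fun x => max b x) ⁻¹' Set.Ico c d \ (fun x => max a x) ⁻¹' Set.Ico c d = Set.Iio c := by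
  ext x
  simp only [Set.mem_sdiff, Set.mem_preimage, Set.mem_Ico, le_max_iff, max_lt_iff, Set.mem_Iio]
  constructor
  · rintro ⟨⟨-, -, hxd⟩, hnot⟩
    by_contra hcx
    exact hnot ⟨Or.inr (not_lt.mp hcx), hac.trans_le hcb |>.trans hbd, hxd⟩
  · intro hxc
    exact ⟨⟨Or.inl hcb, hbd, hxc.trans (hcb.trans_lt hbd)⟩, fun h => by
      rcases h.1 with h | h <;> order⟩

lemma preimage_max_Ico_sdiff_eq_empty (hab : a ≤ b) (h : ¬(a < c ∧ c ≤ b ∧ b < d)) :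
    (fun x => max b x) ⁻¹' Set.Ico c d \ (fun x => max a x) ⁻¹' Set.Ico c d = ∅ := by
  refine Set.eq_empty_of_forall_notMem fun x ⟨hxb, hxa⟩ => ?_
  simp only [Set.mem_preimage, Set.mem_Ico, le_max_iff, max_lt_iff] at hxb hxa
  obtain ⟨hcb | hcx, hbd, hxd⟩ := hxb
  · exact hxa ⟨Or.inl (not_lt.mp fun hac => h ⟨hac, hcb, hbd⟩), hab.trans_lt hbd, hxd⟩
  · exact hxa ⟨Or.inr hcx, hab.trans_lt hbd, hxd⟩

end

open CategoryTheory Limits in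
theorem shExt_interval_general (k : Type) [Field k] (a b c d : ℝ) (hab : a < b) :
    ((a < c ∧ c ≤ b ∧ b < d) →
      Nonempty
        (cokernel (homScriptContraMap k
            (intervalHom k (Set.Ici b) (Set.Ici a)
              (.of_ordConnected Set.ordConnected_Ici)
              (.of_ordConnected Set.ordConnected_Ici)
              (fun x y hxy hx _ => iff_of_true (hx.trans hxy) (le_trans hab.le hx)))
            (intervalModule k (Set.Ico c d) (.of_ordConnected Set.ordConnected_Ico))) ≅
          intervalModule k (Set.Iio c) (.of_ordConnected Set.ordConnected_Iio))) ∧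
    (¬(a < c ∧ c ≤ b ∧ b < d) →
      IsZero
        (cokernel (homScriptContraMap k
          (intervalHom k (Set.Ici b) (Set.Ici a)
            (.of_ordConnected Set.ordConnected_Ici)
            (.of_ordConnected Set.ordConnected_Ici)
            (fun x y hxy hx _ => iff_of_true (hx.trans hxy) (le_trans hab.le hx)))
          (intervalModule k (Set.Ico c d) (.of_ordConnected Set.ordConnected_Ico))))) := by
  have e := cokernelHomScriptContraMapIso (k := k) (I := Set.Ico c d) (a := a) (b := b)
    (.of_ordConnected Set.ordConnected_Ico) (.of_ordConnected Set.ordConnected_Ici)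
    (.of_ordConnected Set.ordConnected_Ici) hab.le
    (fun _ _ hxy hx _ => iff_of_true (hx.trans hxy) (hab.le.trans hx))
  refine ⟨fun ⟨hac, hcb, hbd⟩ => ⟨e ≪≫ intervalModuleIsoOfEq k _ _
    (preimage_max_Ico_sdiff_eq_Iio hac hcb hbd)⟩, fun h => ?_⟩
  exact (isZero_intervalModule_of_eq_empty k _ (preimage_max_Ico_sdiff_eq_empty hab.le h)).of_iso e

open CategoryTheory Limits in
/-- First sheaf Ext of interval modules, computed as the cokernel of the map obtained by
applying the sheaf internal hom `Hom_sh(−, k[c,d))` to the projective resolution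
`0 → k[b,∞) → k[a,∞) → k[a,b) → 0`:
`Ext¹_sh(k[a,b), k[c,d)) ≅ k(−∞,c)` if `a < c ≤ b < d`, and `0` otherwise. -/
theorem shExt_interval (k : Type) [Field k] (a b c d : ℝ) (hab : a < b) (hcd : c < d) :
    ((a < c ∧ c ≤ b ∧ b < d) →
      Nonempty
        (cokernel (homScriptContraMap k
            (intervalHom k (Set.Ici b) (Set.Ici a)
              (.of_ordConnected Set.ordConnected_Ici)
              (.of_ordConnected Set.ordConnected_Ici)
              (fun x y hxy hx _ => iff_of_true (hx.trans hxy) (le_trans hab.le hx)))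
            (intervalModule k (Set.Ico c d) (.of_ordConnected Set.ordConnected_Ico))) ≅
          intervalModule k (Set.Iio c) (.of_ordConnected Set.ordConnected_Iio))) ∧
    (¬(a < c ∧ c ≤ b ∧ b < d) →
      IsZero
        (cokernel (homScriptContraMap k
          (intervalHom k (Set.Ici b) (Set.Ici a)
            (.of_ordConnected Set.ordConnected_Ici)
            (.of_ordConnected Set.ordConnected_Ici)
            (fun x y hxy hx _ => iff_of_true (hx.trans hxy) (le_trans hab.le hx)))
          (intervalModule k (Set.Ico c d) (.of_ordConnected Set.ordConnected_Ico))))) :=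
  shExt_interval_general k a b c d hab
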